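/- If there exists a channel R with (R∘N)†(a) = a for all a in an algebra A, then R∘N restricted appropriately satisfies P_A ∘ R ∘ N = P_A, where P_A is the Hilbert–Schmidt-orthogonal projection onto A; consequently there exists a (possibly different) channel R' with R' ∘ N = P_A. -/

import Mathlib

open Matrix Kronecker MeasureTheory
open scoped ComplexOrder

noncomputable section

/-- Square complex matrices of size `n`. -/
abbrev Mat (n : ℕ) := Matrix (Fin n) (Fin n) ℂ

/-- Operator norm (spectral norm) of a square matrix. -/
noncomputable def opNorm {m : Type*} [Fintype m] [DecidableEq m]
    (A : Matrix m m ℂ) : ℝ :=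
  ‖Matrix.toEuclideanCLM (𝕜 := ℂ) A‖

/-- Trace norm of a square matrix. -/
noncomputable def traceNorm {m : Type*} [Fintype m] [DecidableEq m]
    (A : Matrix m m ℂ) : ℝ :=
  (((Matrix.posSemidef_conjTranspose_mul_self A).1.eigenvectorUnitary : Matrix m m ℂ) *
    diagonal (((↑) : ℝ → ℂ) ∘ Real.sqrt ∘ (Matrix.posSemidef_conjTranspose_mul_self A).1.eigenvalues) *
    (star (Matrix.posSemidef_conjTranspose_mul_self A).1.eigenvectorUnitary : Matrix m m ℂ)).trace.re

/-- Trivial extension `Φ ⊗ id` of a map on matrices, defined entrywise. -/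
def extendId {a b : ℕ} (Φ : Mat a → Mat b) (m : ℕ)
    (M : Matrix (Fin a × Fin m) (Fin a × Fin m) ℂ) :
    Matrix (Fin b × Fin m) (Fin b × Fin m) ℂ :=
  Matrix.of fun r c => Φ (Matrix.of fun p q => M (p, r.2) (q, c.2)) r.1 c.1

/-- Diamond norm of a (difference of) map(s) `Mat a → Mat b`, with ancilla of
dimension equal to the input dimension. -/
noncomputable def dnorm {a b : ℕ} (Φ : Mat a → Mat b) : ℝ :=
  ⨆ ρ : {ρ : Matrix (Fin a × Fin a) (Fin a × Fin a) ℂ // ρ.PosSemidef ∧ ρ.trace = 1},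
    traceNorm (extendId Φ a ρ.1)

/-- A map is a quantum channel (CPTP) iff it admits a Kraus representation. -/
def IsCPTP {a b : ℕ} (Φ : Mat a → Mat b) : Prop :=
  ∃ (κ : ℕ) (K : Fin κ → Matrix (Fin b) (Fin a) ℂ),
    (∀ ρ, Φ ρ = ∑ i, K i * ρ * (K i)ᴴ) ∧ (∑ i, (K i)ᴴ * K i = 1)

/-- `Nh` is a complementary channel of `N` (with environment of dimension `e`). -/
def IsComplementary {a b e : ℕ} (N : Mat a → Mat b) (Nh : Mat a → Mat e) : Prop :=
  ∃ K : Fin e → Matrix (Fin b) (Fin a) ℂ,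
    (∀ ρ, N ρ = ∑ i, K i * ρ * (K i)ᴴ) ∧ (∑ i, (K i)ᴴ * K i = 1) ∧
    (∀ ρ, Nh ρ = Matrix.of fun i j => (K i * ρ * (K j)ᴴ).trace)

/-- The commutant of a set of matrices. -/
def commutant {n : ℕ} (A : Set (Mat n)) : Set (Mat n) :=
  {X | ∀ a ∈ A, a * X = X * a}

/-- `P` is the Hilbert–Schmidt-orthogonal projection onto the set `S`. -/
def IsHSProjectionOnto {n : ℕ} (P : Mat n → Mat n) (S : Set (Mat n)) : Prop :=
  (∀ X, P X ∈ S) ∧ (∀ X ∈ S, P X = X) ∧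
  (∀ X Y, ((P X)ᴴ * Y).trace = (Xᴴ * P Y).trace)

end

/-!
Put `D := P (R (N ρ)) - P ρ ∈ A`. Since `P` is Hilbert–Schmidt self-adjoint and fixes `D`,
`tr (Dᴴ D) = tr ((R (N ρ))ᴴ D) - tr (ρᴴ D)`; channels commute with `ᴴ`, so the correction
hypothesis applied to `ρᴴ` makes this vanish and `D = 0`. The channel `R'` is then `P ∘ R`.
-/

theorem isCPTP_of_kraus {a b : ℕ} {ι : Type*} [Fintype ι] (K : ι → Matrix (Fin b) (Fin a) ℂ)
    (hK : ∑ i, (K i)ᴴ * K i = 1) : IsCPTP fun ρ : Mat a => ∑ i, K i * ρ * (K i)ᴴ := by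
  let e := Fintype.equivFin ι
  refine ⟨Fintype.card ι, K ∘ e.symm, fun ρ => ?_, ?_⟩
  · exact (e.symm.sum_comp fun i => K i * ρ * (K i)ᴴ).symm
  · rw [← hK]
    exact e.symm.sum_comp fun i => (K i)ᴴ * K i

namespace IsCPTP

theorem map_conjTranspose {a b : ℕ} {Φ : Mat a → Mat b} (hΦ : IsCPTP Φ) (X : Mat a) :
    Φ Xᴴ = (Φ X)ᴴ := by
  obtain ⟨κ, K, hK, -⟩ := hΦ
  simp only [hK, conjTranspose_sum, conjTranspose_mul, conjTranspose_conjTranspose,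
    Matrix.mul_assoc]

theorem comp {a b c : ℕ} {Φ : Mat b → Mat c} {Ψ : Mat a → Mat b}
    (hΦ : IsCPTP Φ) (hΨ : IsCPTP Ψ) : IsCPTP fun ρ => Φ (Ψ ρ) := by
  obtain ⟨κ, K, hK, hK1⟩ := hΦ
  obtain ⟨μ, L, hL, hL1⟩ := hΨ
  have hKL : ∑ p : Fin κ × Fin μ, (K p.1 * L p.2)ᴴ * (K p.1 * L p.2) = 1 := by
    rw [Fintype.sum_prod_type_right, ← hL1]
    refine Finset.sum_congr rfl fun j _ => ?_
    calc ∑ i, (K i * L j)ᴴ * (K i * L j) = (L j)ᴴ * (∑ i, (K i)ᴴ * K i) * L j := by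
          simp only [Matrix.mul_sum, Matrix.sum_mul, conjTranspose_mul, Matrix.mul_assoc]
      _ = (L j)ᴴ * L j := by rw [hK1, Matrix.mul_one]
  convert isCPTP_of_kraus (fun p : Fin κ × Fin μ => K p.1 * L p.2) hKL using 2 with ρ
  simp only [hK, hL, Fintype.sum_prod_type, Matrix.mul_sum, Matrix.sum_mul, conjTranspose_mul,
    Matrix.mul_assoc]

end IsCPTP

namespace IsHSProjectionOnto

variable {n : ℕ} {P : Mat n → Mat n} {S : Set (Mat n)}

theorem trace_conjTranspose_mul_of_mem (hP : IsHSProjectionOnto P S) (X : Mat n) {Y : Mat n}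
    (hY : Y ∈ S) : ((P X)ᴴ * Y).trace = (Xᴴ * Y).trace := by
  obtain ⟨-, hfix, hsymm⟩ := hP
  rw [hsymm, hfix Y hY]

theorem eq_of_forall_trace_eq (hP : IsHSProjectionOnto P S)
    (hS : ∀ x ∈ S, ∀ y ∈ S, x - y ∈ S) {X Y : Mat n}
    (hXY : ∀ a ∈ S, (Xᴴ * a).trace = (Yᴴ * a).trace) : P X = P Y := by
  have hD : P X - P Y ∈ S := hS _ (hP.1 X) _ (hP.1 Y)
  rw [← sub_eq_zero, ← trace_conjTranspose_mul_self_eq_zero_iff]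
  rw [conjTranspose_sub, Matrix.sub_mul, trace_sub, hP.trace_conjTranspose_mul_of_mem X hD,
    hP.trace_conjTranspose_mul_of_mem Y hD, hXY _ hD, sub_self]

end IsHSProjectionOnto

/-- exact correction of an algebra implies `P_A ∘ R ∘ N = P_A`,
and hence some channel `R'` with `R' ∘ N = P_A`. -/
theorem stmt_8 {d b : ℕ} (N : Mat d → Matrix (Fin b) (Fin b) ℂ) (hN : IsCPTP N)
    (R : Matrix (Fin b) (Fin b) ℂ → Mat d) (hR : IsCPTP R)
    (A : StarSubalgebra ℂ (Mat d))
    (P : Mat d → Mat d) (hP : IsHSProjectionOnto P (A : Set (Mat d)))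
    (hPchan : IsCPTP P)
    (hcorr : ∀ a ∈ A, ∀ ρ : Mat d, (R (N ρ) * a).trace = (ρ * a).trace) :
    (∀ ρ, P (R (N ρ)) = P ρ) ∧
      ∃ R' : Matrix (Fin b) (Fin b) ℂ → Mat d, IsCPTP R' ∧ ∀ ρ, R' (N ρ) = P ρ := by
  have hPRN : ∀ ρ, P (R (N ρ)) = P ρ := fun ρ =>
    hP.eq_of_forall_trace_eq (fun _ hx _ hy => A.sub_mem hx hy) fun a ha => by
      rw [← hR.map_conjTranspose, ← hN.map_conjTranspose, hcorr a ha]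
  exact ⟨hPRN, fun σ => P (R σ), hPchan.comp hR, hPRN⟩
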